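/- Let g be a real symmetric invertible n×n matrix (possibly indefinite) and B a real skew-symmetric n×n matrix, and let 𝐆(g,B) := [[g − Bg⁻¹B, Bg⁻¹],[−g⁻¹B, g⁻¹]] (2n×2n block matrix). Let O be a real 2n×2n matrix with OᵀJO = J, with n×n blocks O = [[O₁,O₂],[O₃,O₄]], and set 𝐆' := Oᵀ·𝐆(g,B)·O and Φ₊ := O₄ᵀ + O₂ᵀ(g + B). Then: (i) the bottom-right n×n block h' of 𝐆' satisfies h' = Φ₊ g⁻¹ Φ₊ᵀ; (ii) det(h') = (det Φ₊)² / det(g); and (iii) there exist a symmetric invertible n×n matrix g' and a skew-symmetric n×n matrix B' with 𝐆' = 𝐆(g',B') if and only if Φ₊ is invertible. -/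
import Mathlib


open Matrix

/-- The canonical pairing matrix `J = [[0,1],[1,0]]` of signature `(n,n)`. -/
def Jmat (n : ℕ) : Matrix (Fin n ⊕ Fin n) (Fin n ⊕ Fin n) ℝ :=
  Matrix.fromBlocks 0 1 1 0

/-- The (possibly indefinite) generalized metric
`𝐆(g,B) = [[g − Bg⁻¹B, Bg⁻¹],[−g⁻¹B, g⁻¹]]`. -/
noncomputable def genMet (n : ℕ) (g B : Matrix (Fin n) (Fin n) ℝ) :
    Matrix (Fin n ⊕ Fin n) (Fin n ⊕ Fin n) ℝ :=
  Matrix.fromBlocks (g - B * g⁻¹ * B) (B * g⁻¹) (-(g⁻¹ * B)) g⁻¹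

section Aux

variable {n : ℕ}

lemma Jmat_sq (n : ℕ) : Jmat n * Jmat n = 1 := by
  simp [Jmat, fromBlocks_multiply, ← fromBlocks_one]

lemma genMet_factor (g B : Matrix (Fin n) (Fin n) ℝ) (hB : Bᵀ = -B) :
    genMet n g B =
      fromBlocks 1 B 0 1 * fromBlocks g 0 0 g⁻¹ * (fromBlocks 1 B 0 1)ᵀ := by
  simp [genMet, fromBlocks_multiply, fromBlocks_transpose, hB, Matrix.mul_neg,
    sub_eq_add_neg]

lemma genMet_symm (g B : Matrix (Fin n) (Fin n) ℝ) (hsym : gᵀ = g) (hB : Bᵀ = -B) :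
    (genMet n g B)ᵀ = genMet n g B := by
  rw [genMet_factor g B hB]
  have hD : (fromBlocks g 0 0 g⁻¹ : Matrix (Fin n ⊕ Fin n) (Fin n ⊕ Fin n) ℝ)ᵀ =
      fromBlocks g 0 0 g⁻¹ := by
    simp [fromBlocks_transpose, hsym, Matrix.transpose_nonsing_inv, hsym]
  calc (fromBlocks 1 B 0 1 * fromBlocks g 0 0 g⁻¹ * (fromBlocks 1 B 0 1)ᵀ)ᵀ
      = fromBlocks 1 B 0 1 * (fromBlocks g 0 0 g⁻¹)ᵀ * (fromBlocks 1 B 0 1)ᵀ := by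
        simp [Matrix.transpose_mul, mul_assoc]
    _ = _ := by rw [hD]

lemma genMet_J_genMet (g B : Matrix (Fin n) (Fin n) ℝ) (hsym : gᵀ = g)
    (hu : IsUnit g) (hB : Bᵀ = -B) :
    genMet n g B * Jmat n * genMet n g B = Jmat n := by
  have hud : IsUnit g.det := (Matrix.isUnit_iff_isUnit_det g).mp hu
  have hg1 : g * g⁻¹ = 1 := Matrix.mul_nonsing_inv g hud
  have hg2 : g⁻¹ * g = 1 := Matrix.nonsing_inv_mul g hud
  set E : Matrix (Fin n ⊕ Fin n) (Fin n ⊕ Fin n) ℝ := fromBlocks 1 B 0 1 with hE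
  set D : Matrix (Fin n ⊕ Fin n) (Fin n ⊕ Fin n) ℝ := fromBlocks g 0 0 g⁻¹ with hD
  have hDJD : D * Jmat n * D = Jmat n := by
    simp [hD, Jmat, fromBlocks_multiply, hg1, hg2]
  have hEJE : Eᵀ * Jmat n * E = Jmat n := by
    simp [hE, Jmat, fromBlocks_multiply, fromBlocks_transpose, hB]
  have hEJE' : E * Jmat n * Eᵀ = Jmat n := by
    simp [hE, Jmat, fromBlocks_multiply, fromBlocks_transpose, hB]
  rw [genMet_factor g B hB, ← hE, ← hD]
  calc E * D * Eᵀ * Jmat n * (E * D * Eᵀ)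
      = E * D * (Eᵀ * Jmat n * E) * D * Eᵀ := by noncomm_ring
    _ = E * (D * Jmat n * D) * Eᵀ := by rw [hEJE]; noncomm_ring
    _ = E * Jmat n * Eᵀ := by rw [hDJD]
    _ = Jmat n := hEJE'

/-- Recognition lemma: a symmetric `M = fromBlocks a b c h` with `M J M = J`
and `h` invertible is of the form `genMet h⁻¹ (-(h⁻¹ * c))`. -/
lemma recog (a b c h : Matrix (Fin n) (Fin n) ℝ)
    (hh : hᵀ = h) (hbc : bᵀ = c) (hhu : IsUnit h)
    (r1 : h * a + c * c = 1) (r2 : h * b + c * h = 0) :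
    fromBlocks a b c h = genMet n h⁻¹ (-(h⁻¹ * c)) ∧
      (h⁻¹)ᵀ = h⁻¹ ∧ IsUnit (h⁻¹ : Matrix (Fin n) (Fin n) ℝ) ∧
      (-(h⁻¹ * c))ᵀ = -(-(h⁻¹ * c)) := by
  have hud : IsUnit h.det := (Matrix.isUnit_iff_isUnit_det h).mp hhu
  have hh1 : h * h⁻¹ = 1 := Matrix.mul_nonsing_inv h hud
  have hh2 : h⁻¹ * h = 1 := Matrix.nonsing_inv_mul h hud
  have hinv : (h⁻¹)⁻¹ = h := Matrix.nonsing_inv_nonsing_inv h hud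
  have hht : (h⁻¹)ᵀ = h⁻¹ := by rw [Matrix.transpose_nonsing_inv, hh]
  have hcb : cᵀ = b := by rw [← hbc, Matrix.transpose_transpose]
  have hbh : b = -(h⁻¹ * (c * h)) := by
    have hb2 : h * b = -(c * h) := eq_neg_of_add_eq_zero_left r2
    calc b = h⁻¹ * (h * b) := by rw [← mul_assoc, hh2, one_mul]
      _ = -(h⁻¹ * (c * h)) := by rw [hb2, Matrix.mul_neg]
  have hskew : (-(h⁻¹ * c))ᵀ = -(-(h⁻¹ * c)) := by
    rw [neg_neg, Matrix.transpose_neg, Matrix.transpose_mul, hht, hcb, hbh]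
    calc -(-(h⁻¹ * (c * h)) * h⁻¹) = h⁻¹ * (c * (h * h⁻¹)) := by noncomm_ring
      _ = h⁻¹ * c := by rw [hh1, mul_one]
  refine ⟨?_, hht, Matrix.isUnit_nonsing_inv_iff.mpr hhu, hskew⟩
  rw [genMet]
  have e22 : (h⁻¹ : Matrix (Fin n) (Fin n) ℝ)⁻¹ = h := hinv
  have e21 : -((h⁻¹)⁻¹ * -(h⁻¹ * c)) = c := by
    rw [e22]
    calc -(h * -(h⁻¹ * c)) = h * h⁻¹ * c := by noncomm_ring
      _ = c := by rw [hh1, one_mul]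
  have e12 : -(h⁻¹ * c) * (h⁻¹)⁻¹ = b := by
    rw [e22, hbh]
    noncomm_ring
  have e11 : h⁻¹ - -(h⁻¹ * c) * (h⁻¹)⁻¹ * -(h⁻¹ * c) = a := by
    rw [e22]
    have hca : (1 : Matrix (Fin n) (Fin n) ℝ) - c * c = h * a := by
      rw [← r1]; abel
    calc h⁻¹ - -(h⁻¹ * c) * h * -(h⁻¹ * c)
        = h⁻¹ * (1 - c * (h * h⁻¹) * c) := by noncomm_ring
      _ = h⁻¹ * (1 - c * c) := by rw [hh1]; noncomm_ring
      _ = h⁻¹ * (h * a) := by rw [hca]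
      _ = (h⁻¹ * h) * a := by rw [mul_assoc]
      _ = a := by rw [hh2, one_mul]
  rw [e11, e12, e21, e22]

end Aux

/-- **Indefinite case.** For `g` symmetric invertible, `B` skew-symmetric and
`O ∈ O(n,n)` with blocks `Oᵢ`, set `𝐆' = Oᵀ𝐆(g,B)O` and
`Φ₊ = O₄ᵀ + O₂ᵀ(g+B)`. Then the bottom-right block `h'` of `𝐆'` equals
`Φ₊ g⁻¹ Φ₊ᵀ`, `det h' = (det Φ₊)²/det g`, and `𝐆'` is of the form `𝐆(g',B')`
for some symmetric invertible `g'` and skew-symmetric `B'` iff `Φ₊` is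
invertible. -/
theorem stmt_15 (n : ℕ) (g B O₁ O₂ O₃ O₄ : Matrix (Fin n) (Fin n) ℝ)
    (hsym : gᵀ = g) (hu : IsUnit g) (hB : Bᵀ = -B)
    (hO : (fromBlocks O₁ O₂ O₃ O₄)ᵀ * Jmat n * fromBlocks O₁ O₂ O₃ O₄ = Jmat n) :
    ((fromBlocks O₁ O₂ O₃ O₄)ᵀ * genMet n g B *
        fromBlocks O₁ O₂ O₃ O₄).toBlocks₂₂ =
      (O₄ᵀ + O₂ᵀ * (g + B)) * g⁻¹ * (O₄ᵀ + O₂ᵀ * (g + B))ᵀ ∧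
    (((fromBlocks O₁ O₂ O₃ O₄)ᵀ * genMet n g B *
        fromBlocks O₁ O₂ O₃ O₄).toBlocks₂₂).det =
      (O₄ᵀ + O₂ᵀ * (g + B)).det ^ 2 / g.det ∧
    ((∃ g' B' : Matrix (Fin n) (Fin n) ℝ, g'ᵀ = g' ∧ IsUnit g' ∧ B'ᵀ = -B' ∧
        (fromBlocks O₁ O₂ O₃ O₄)ᵀ * genMet n g B * fromBlocks O₁ O₂ O₃ O₄ =
          genMet n g' B') ↔
      IsUnit (O₄ᵀ + O₂ᵀ * (g + B))) := by
  have hud : IsUnit g.det := (Matrix.isUnit_iff_isUnit_det g).mp hu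
  have hg1 : g * g⁻¹ = 1 := Matrix.mul_nonsing_inv g hud
  have hg2 : g⁻¹ * g = 1 := Matrix.nonsing_inv_mul g hud
  set O : Matrix (Fin n ⊕ Fin n) (Fin n ⊕ Fin n) ℝ := fromBlocks O₁ O₂ O₃ O₄ with hOdef
  set Φ : Matrix (Fin n) (Fin n) ℝ := O₄ᵀ + O₂ᵀ * (g + B) with hΦdef
  -- the O(n,n) relation on blocks
  have hO22 : O₄ᵀ * O₂ + O₂ᵀ * O₄ = 0 := by
    have h := congrArg Matrix.toBlocks₂₂ hO
    simpa [hOdef, Jmat, fromBlocks_transpose, fromBlocks_multiply] using h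
  -- part (i)
  have hΦt : Φᵀ = O₄ + (g - B) * O₂ := by
    simp [hΦdef, Matrix.transpose_add, Matrix.transpose_mul, hsym, hB, sub_eq_add_neg,
      add_mul, neg_mul]
  have part1 : (Oᵀ * genMet n g B * O).toBlocks₂₂ = Φ * g⁻¹ * Φᵀ := by
    have lhs_eq : (Oᵀ * genMet n g B * O).toBlocks₂₂ =
        (O₂ᵀ * (g - B * g⁻¹ * B) + O₄ᵀ * -(g⁻¹ * B)) * O₂ +
          (O₂ᵀ * (B * g⁻¹) + O₄ᵀ * g⁻¹) * O₄ := by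
      simp [hOdef, genMet, fromBlocks_transpose, fromBlocks_multiply]
    rw [lhs_eq, hΦt]
    have e1 : g⁻¹ * (g - B) = 1 - g⁻¹ * B := by
      rw [Matrix.mul_sub, hg2]
    have e2 : (g + B) * g⁻¹ = 1 + B * g⁻¹ := by
      rw [Matrix.add_mul, hg1]
    have e3 : (g + B) * g⁻¹ * (g - B) = g - B * g⁻¹ * B := by
      rw [e2]
      calc (1 + B * g⁻¹) * (g - B) = g - B + B * (g⁻¹ * g) - B * g⁻¹ * B := by noncomm_ring
        _ = g - B * g⁻¹ * B := by rw [hg2]; noncomm_ring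
    symm
    calc Φ * g⁻¹ * (O₄ + (g - B) * O₂)
        = O₄ᵀ * g⁻¹ * O₄ + O₄ᵀ * (g⁻¹ * (g - B)) * O₂ + O₂ᵀ * ((g + B) * g⁻¹) * O₄ +
            O₂ᵀ * ((g + B) * g⁻¹ * (g - B)) * O₂ := by rw [hΦdef]; noncomm_ring
      _ = O₄ᵀ * g⁻¹ * O₄ + O₄ᵀ * (1 - g⁻¹ * B) * O₂ + O₂ᵀ * (1 + B * g⁻¹) * O₄ +
            O₂ᵀ * (g - B * g⁻¹ * B) * O₂ := by rw [e3, e1, e2]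
      _ = ((O₂ᵀ * (g - B * g⁻¹ * B) + O₄ᵀ * -(g⁻¹ * B)) * O₂ +
            (O₂ᵀ * (B * g⁻¹) + O₄ᵀ * g⁻¹) * O₄) + (O₄ᵀ * O₂ + O₂ᵀ * O₄) := by noncomm_ring
      _ = _ := by rw [hO22, add_zero]
  -- part (ii)
  have hdetinv : (g⁻¹ : Matrix (Fin n) (Fin n) ℝ).det = (g.det)⁻¹ := by
    rw [Matrix.det_nonsing_inv, Ring.inverse_eq_inv']
  have part2 : ((Oᵀ * genMet n g B * O).toBlocks₂₂).det = Φ.det ^ 2 / g.det := by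
    rw [part1, Matrix.det_mul, Matrix.det_mul, Matrix.det_transpose, hdetinv]
    ring
  refine ⟨part1, part2, ?_, ?_⟩
  · -- existence of g', B' implies Φ invertible
    rintro ⟨g', B', hg's, hg'u, hB's, hM⟩
    have hg'ud : IsUnit g'.det := (Matrix.isUnit_iff_isUnit_det g').mp hg'u
    have h22 : (Oᵀ * genMet n g B * O).toBlocks₂₂ = g'⁻¹ := by
      rw [hM]; simp [genMet]
    have hdet' : ((Oᵀ * genMet n g B * O).toBlocks₂₂).det ≠ 0 := by
      rw [h22, Matrix.det_nonsing_inv, Ring.inverse_eq_inv']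
      exact inv_ne_zero hg'ud.ne_zero
    rw [part2] at hdet'
    have hΦdet : Φ.det ≠ 0 := by
      intro h0
      apply hdet'
      rw [h0]; ring
    exact (Matrix.isUnit_iff_isUnit_det Φ).mpr (isUnit_iff_ne_zero.mpr hΦdet)
  · -- Φ invertible implies existence
    intro hΦu
    -- set M and its blocks
    set M : Matrix (Fin n ⊕ Fin n) (Fin n ⊕ Fin n) ℝ := Oᵀ * genMet n g B * O with hMdef
    have hMsym : Mᵀ = M := by
      rw [hMdef]
      calc (Oᵀ * genMet n g B * O)ᵀ = Oᵀ * (genMet n g B)ᵀ * O := by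
            simp [Matrix.transpose_mul, mul_assoc]
        _ = Oᵀ * genMet n g B * O := by rw [genMet_symm g B hsym hB]
    -- O J Oᵀ = J
    have hJJ := Jmat_sq n
    have hleft : (Jmat n * Oᵀ * Jmat n) * O = 1 := by
      calc (Jmat n * Oᵀ * Jmat n) * O = Jmat n * (Oᵀ * Jmat n * O) := by noncomm_ring
        _ = Jmat n * Jmat n := by rw [hO]
        _ = 1 := hJJ
    have hright : O * (Jmat n * Oᵀ * Jmat n) = 1 := mul_eq_one_comm.mp hleft
    have hOJOt : O * Jmat n * Oᵀ = Jmat n := by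
      calc O * Jmat n * Oᵀ = O * Jmat n * Oᵀ * (Jmat n * Jmat n) := by rw [hJJ, mul_one]
        _ = (O * (Jmat n * Oᵀ * Jmat n)) * Jmat n := by noncomm_ring
        _ = Jmat n := by rw [hright, one_mul]
    have hMJM : M * Jmat n * M = Jmat n := by
      calc M * Jmat n * M = Oᵀ * genMet n g B * (O * Jmat n * Oᵀ) * genMet n g B * O := by
            rw [hMdef]; noncomm_ring
        _ = Oᵀ * (genMet n g B * Jmat n * genMet n g B) * O := by rw [hOJOt]; noncomm_ring
        _ = Oᵀ * Jmat n * O := by rw [genMet_J_genMet g B hsym hu hB]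
        _ = Jmat n := hO
    -- blocks of M
    set a := M.toBlocks₁₁ with hadef
    set b := M.toBlocks₁₂ with hbdef
    set c := M.toBlocks₂₁ with hcdef
    set h := M.toBlocks₂₂ with hhdef
    have hMblocks : M = fromBlocks a b c h := (fromBlocks_toBlocks M).symm
    have hhsym : hᵀ = h := by
      have := congrArg Matrix.toBlocks₂₂ hMsym
      simpa [hMblocks, fromBlocks_transpose] using this
    have hbc : bᵀ = c := by
      have := congrArg Matrix.toBlocks₂₁ hMsym
      simpa [hMblocks, fromBlocks_transpose] using this
    have hhu : IsUnit h := by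
      have hh : h = Φ * g⁻¹ * Φᵀ := part1
      rw [hh]
      have hgi : IsUnit (g⁻¹ : Matrix (Fin n) (Fin n) ℝ) :=
        Matrix.isUnit_nonsing_inv_iff.mpr hu
      have hΦt' : IsUnit Φᵀ := (Matrix.isUnit_iff_isUnit_det _).mpr
        (by rw [Matrix.det_transpose]; exact (Matrix.isUnit_iff_isUnit_det Φ).mp hΦu)
      exact (hΦu.mul hgi).mul hΦt'
    -- relations from M J M = J
    have hrel := hMJM
    rw [hMblocks] at hrel
    have hr : fromBlocks (b * a + a * c) (b * b + a * h) (h * a + c * c) (h * b + c * h) =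
        (Jmat n : Matrix (Fin n ⊕ Fin n) (Fin n ⊕ Fin n) ℝ) := by
      rw [← hrel, Jmat]
      simp [fromBlocks_multiply]
    have r1 : h * a + c * c = 1 := by
      have := congrArg Matrix.toBlocks₂₁ hr
      simpa [Jmat] using this
    have r2 : h * b + c * h = 0 := by
      have := congrArg Matrix.toBlocks₂₂ hr
      simpa [Jmat] using this
    obtain ⟨heq, hinvsym, hinvu, hskew⟩ := recog a b c h hhsym hbc hhu r1 r2
    exact ⟨h⁻¹, -(h⁻¹ * c), hinvsym, hinvu, hskew, by rw [hMblocks, heq]⟩
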